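/- arXiv:1804.08308 — 3 statements merged into one kernel-verified Lean document; each statement's English description precedes it below -/
import Mathlib

section
/- Let (M, →) be a transition system and let P, Q ⊆ M be state predicates. Then the reachability predicate P ⇒ Q is demonically valid, i.e. (P, Q) ∈ ν DVP̂, if and only if every complete execution path τ of (M, →) with hd(τ) ∈ P satisfies P ⇒ Q, i.e. (τ, (P, Q)) ∈ ν EPSRP̂. -/
variable {M : Type*}

/-- `P` is runnable: `P ≠ ∅` and every state in `P` has a successor. -/
def Runnable (R : M → M → Prop) (P : Set M) : Prop :=
  P ≠ ∅ ∧ ∀ γ ∈ P, ∃ γ', R γ γ'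

/-- The derivative `∂(P)` of a state predicate `P`. -/
def derivS (R : M → M → Prop) (P : Set M) : Set M :=
  {γ' | ∃ γ ∈ P, R γ γ'}

/-- The monotone operator `DVP̂` on sets of reachability predicates. -/
def DVPhat (R : M → M → Prop) : Set (Set M × Set M) →o Set (Set M × Set M) where
  toFun X := {pq | pq.1 ⊆ pq.2 ∨
      (Runnable R (pq.1 \ pq.2) ∧ (derivS R (pq.1 \ pq.2), pq.2) ∈ X)}
  monotone' := by
    intro X Y hXY pq hpq
    rcases hpq with h | ⟨h1, h2⟩
    · exact Or.inl h
    · exact Or.inr ⟨h1, hXY h2⟩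

/-- `(M, →) ⊨∀ P ⇒ Q` : the reachability predicate `P ⇒ Q` is demonically valid,
i.e. `(P, Q) ∈ ν DVP̂`. -/
def DemValid (R : M → M → Prop) (P Q : Set M) : Prop :=
  (P, Q) ∈ OrderHom.gfp (DVPhat R)

/-- A complete execution path of the transition system `(M, R)`: a nonempty finite or
infinite sequence of states such that consecutive states are related by `R` and, if the
sequence is finite, its last state is irreducible. -/
structure ExecPath (M : Type*) (R : M → M → Prop) where
  seq : ℕ → Option M
  nonempty : (seq 0).isSome
  closed : ∀ n, (seq (n + 1)).isSome → (seq n).isSome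
  step : ∀ n a b, seq n = some a → seq (n + 1) = some b → R a b
  complete : ∀ n a, seq n = some a → seq (n + 1) = none → ∀ b, ¬ R a b

/-- The first state of an execution path. -/
def ExecPath.hd {R : M → M → Prop} (τ : ExecPath M R) : M :=
  (τ.seq 0).get τ.nonempty

/-- `τ.IsCons γ τ'` means `τ = γ·τ'`: `τ` is the execution path with first state `γ`
followed by the execution path `τ'`. -/
def ExecPath.IsCons {R : M → M → Prop} (τ : ExecPath M R) (γ : M) (τ' : ExecPath M R) : Prop :=
  τ.seq 0 = some γ ∧ ∀ n, τ.seq (n + 1) = τ'.seq n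

/-- The monotone operator `EPSRP̂` on sets of pairs (execution path, reachability predicate). -/
def EPSRPhat (R : M → M → Prop) :
    Set (ExecPath M R × (Set M × Set M)) →o Set (ExecPath M R × (Set M × Set M)) where
  toFun Y := {p | p.1.hd ∈ p.2.1 ∩ p.2.2 ∨
      ∃ γ₀ τ', p.1.IsCons γ₀ τ' ∧ γ₀ ∈ p.2.1 ∧ R γ₀ τ'.hd ∧
        (τ', (derivS R p.2.1, p.2.2)) ∈ Y}
  monotone' := by
    intro X Y hXY p hp
    rcases hp with h | ⟨γ₀, τ', h1, h2, h3, h4⟩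
    · exact Or.inl h
    · exact Or.inr ⟨γ₀, τ', h1, h2, h3, hXY h4⟩

/-- `τ ⊨∀ P ⇒ Q` : the execution path `τ` satisfies the reachability predicate `P ⇒ Q`,
i.e. `(τ, (P, Q)) ∈ ν EPSRP̂`. -/
def PathSat {M : Type*} (R : M → M → Prop) (τ : ExecPath M R) (P Q : Set M) : Prop :=
  (τ, (P, Q)) ∈ OrderHom.gfp (EPSRPhat R)

/-! The successive derivatives of `P` contain the successive states of any path starting in `P`,
so whether a path satisfies `P ⇒ Q` depends on `P` only through `hd τ ∈ P`. Demonic validity, on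
the other hand, is antitone in `P`, so it can be followed one state at a time. With these two
facts each direction is a coinduction: removing the first state of a path matches a step of
`DVP̂`, and prepending a state of `P \ Q` to a path from `∂(P \ Q)` turns the hypothesis on
paths from `P` into one on paths from `∂(P \ Q)`. -/

theorem derivS_mono {R : M → M → Prop} {P P' : Set M} (h : P ⊆ P') :
    derivS R P ⊆ derivS R P' := by
  rintro γ' ⟨γ, hγ, hR⟩
  exact ⟨γ, h hγ, hR⟩

namespace ExecPath

variable {R : M → M → Prop}

theorem ext' {τ τ' : ExecPath M R} (h : ∀ n, τ.seq n = τ'.seq n) : τ = τ' := by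
  cases τ
  cases τ'
  congr
  exact funext h

theorem seq_zero (τ : ExecPath M R) : τ.seq 0 = some τ.hd :=
  (Option.some_get τ.nonempty).symm

theorem IsCons.eq_hd {τ τ' : ExecPath M R} {γ : M} (h : τ.IsCons γ τ') : γ = τ.hd :=
  Option.some_injective _ (h.1.symm.trans τ.seq_zero)

theorem IsCons.tail_unique {τ τ₁ τ₂ : ExecPath M R} {γ₁ γ₂ : M}
    (h₁ : τ.IsCons γ₁ τ₁) (h₂ : τ.IsCons γ₂ τ₂) : τ₁ = τ₂ :=
  ext' fun n => (h₁.2 n).symm.trans (h₂.2 n)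

def tail (τ : ExecPath M R) (h : (τ.seq 1).isSome) : ExecPath M R where
  seq n := τ.seq (n + 1)
  nonempty := h
  closed n := τ.closed (n + 1)
  step n := τ.step (n + 1)
  complete n := τ.complete (n + 1)

theorem isCons_tail (τ : ExecPath M R) (h : (τ.seq 1).isSome) : τ.IsCons τ.hd (τ.tail h) :=
  ⟨τ.seq_zero, fun _ => rfl⟩

theorem rel_hd_tail (τ : ExecPath M R) (h : (τ.seq 1).isSome) : R τ.hd (τ.tail h).hd :=
  τ.step 0 _ _ τ.seq_zero (τ.tail h).seq_zero

theorem isSome_seq_one_of_rel (τ : ExecPath M R) {γ : M} (h : R τ.hd γ) : (τ.seq 1).isSome := by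
  cases hs : τ.seq 1 with
  | none => exact absurd h (τ.complete 0 _ τ.seq_zero hs γ)
  | some _ => rfl

def cons (γ : M) (τ : ExecPath M R) (h : R γ τ.hd) : ExecPath M R where
  seq
    | 0 => some γ
    | n + 1 => τ.seq n
  nonempty := rfl
  closed
    | 0 => fun _ => rfl
    | n + 1 => τ.closed n
  step
    | 0, _, _, ha, hb => by
      cases ha
      cases τ.seq_zero.symm.trans hb
      exact h
    | n + 1, a, b, ha, hb => τ.step n a b ha hb
  complete
    | 0, _, _, hb => by cases τ.seq_zero.symm.trans hb
    | n + 1, a, ha, hb => τ.complete n a ha hb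

theorem isCons_cons (γ : M) (τ : ExecPath M R) (h : R γ τ.hd) : (cons γ τ h).IsCons γ τ :=
  ⟨rfl, fun _ => rfl⟩

def single (γ : M) (h : ∀ γ', ¬ R γ γ') : ExecPath M R where
  seq n := if n = 0 then some γ else none
  nonempty := rfl
  closed _ := by simp
  step _ _ _ _ := by simp
  complete
    | 0, _, ha, _ => by cases ha; exact h
    | n + 1, _, ha, _ => by simp at ha

end ExecPath

section Coinduction

variable {R : M → M → Prop} {P P' Q : Set M}

theorem demValid_iff :
    DemValid R P Q ↔ P ⊆ Q ∨ (Runnable R (P \ Q) ∧ DemValid R (derivS R (P \ Q)) Q) := by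
  rw [DemValid, ← OrderHom.map_gfp]
  rfl

theorem pathSat_iff {τ : ExecPath M R} :
    PathSat R τ P Q ↔ τ.hd ∈ P ∩ Q ∨
      ∃ γ₀ τ', τ.IsCons γ₀ τ' ∧ γ₀ ∈ P ∧ R γ₀ τ'.hd ∧ PathSat R τ' (derivS R P) Q := by
  rw [PathSat, ← OrderHom.map_gfp]
  rfl

theorem DemValid.mono_left (h : DemValid R P Q) (hP : P' ⊆ P) : DemValid R P' Q := by
  let X : Set (Set M × Set M) := {pq | ∃ S, pq.1 ⊆ S ∧ DemValid R S pq.2}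
  have hX : X ≤ DVPhat R X := by
    rintro ⟨A, B⟩ ⟨S, hAS, hS⟩
    rcases demValid_iff.mp hS with hSB | ⟨⟨-, hrun⟩, hder⟩
    · exact Or.inl (hAS.trans hSB)
    by_cases hAB : A ⊆ B
    · exact Or.inl hAB
    have hsub : A \ B ⊆ S \ B := Set.sdiff_subset_sdiff_left hAS
    refine Or.inr ⟨⟨Set.nonempty_iff_ne_empty.mp (Set.sdiff_nonempty.mpr hAB),
      fun γ hγ => hrun γ (hsub hγ)⟩, derivS R (S \ B), derivS_mono hsub, hder⟩
  exact OrderHom.le_gfp _ hX ⟨P, hP, h⟩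

theorem PathSat.of_hd_mem {τ : ExecPath M R} (h : PathSat R τ P' Q) (hP : τ.hd ∈ P) :
    PathSat R τ P Q := by
  let Y : Set (ExecPath M R × (Set M × Set M)) :=
    {p | p.1.hd ∈ p.2.1 ∧ ∃ S, PathSat R p.1 S p.2.2}
  have hY : Y ≤ EPSRPhat R Y := by
    rintro ⟨σ, A, B⟩ ⟨hσA, S, hσS⟩
    rcases pathSat_iff.mp hσS with hSB | ⟨γ₀, σ', hcons, -, hR, hσ'⟩
    · exact Or.inl ⟨hσA, hSB.2⟩
    · obtain rfl := hcons.eq_hd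
      exact Or.inr ⟨σ.hd, σ', hcons, hσA, hR, ⟨σ.hd, hσA, hR⟩, _, hσ'⟩
  exact OrderHom.le_gfp _ hY (show (τ, (P, Q)) ∈ Y from ⟨hP, P', h⟩)

theorem PathSat.exists_tail {τ : ExecPath M R} (h : PathSat R τ P Q) (hQ : τ.hd ∉ Q) :
    ∃ τ', τ.IsCons τ.hd τ' ∧ R τ.hd τ'.hd ∧ PathSat R τ' (derivS R P) Q := by
  rcases pathSat_iff.mp h with hPQ | ⟨γ₀, τ', hcons, -, hR, hτ'⟩
  · exact absurd hPQ.2 hQ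
  · obtain rfl := hcons.eq_hd
    exact ⟨τ', hcons, hR, hτ'⟩

theorem DemValid.pathSat (h : DemValid R P Q) {τ : ExecPath M R} (hτ : τ.hd ∈ P) :
    PathSat R τ P Q := by
  let Y : Set (ExecPath M R × (Set M × Set M)) :=
    {p | p.1.hd ∈ p.2.1 ∧ DemValid R {p.1.hd} p.2.2}
  have hY : Y ≤ EPSRPhat R Y := by
    rintro ⟨σ, A, B⟩ ⟨hσA, hσB⟩
    by_cases hB : σ.hd ∈ B
    · exact Or.inl ⟨hσA, hB⟩
    rcases demValid_iff.mp hσB with hsub | ⟨⟨-, hrun⟩, hder⟩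
    · exact absurd (hsub rfl) hB
    obtain ⟨γ, hγ⟩ := hrun σ.hd ⟨rfl, hB⟩
    have hs := σ.isSome_seq_one_of_rel hγ
    have hR := σ.rel_hd_tail hs
    have hderiv : (σ.tail hs).hd ∈ derivS R ({σ.hd} \ B) := ⟨σ.hd, ⟨rfl, hB⟩, hR⟩
    exact Or.inr ⟨σ.hd, σ.tail hs, σ.isCons_tail hs, hσA, hR, ⟨σ.hd, hσA, hR⟩,
      hder.mono_left (Set.singleton_subset_iff.mpr hderiv)⟩
  exact OrderHom.le_gfp _ hY
    (show (τ, (P, Q)) ∈ Y from ⟨hτ, h.mono_left (Set.singleton_subset_iff.mpr hτ)⟩)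

theorem demValid_of_forall_pathSat (h : ∀ τ : ExecPath M R, τ.hd ∈ P → PathSat R τ P Q) :
    DemValid R P Q := by
  let X : Set (Set M × Set M) :=
    {pq | ∀ τ : ExecPath M R, τ.hd ∈ pq.1 → PathSat R τ pq.1 pq.2}
  have hX : X ≤ DVPhat R X := by
    rintro ⟨A, B⟩ hA
    by_cases hAB : A ⊆ B
    · exact Or.inl hAB
    have hrun : ∀ γ ∈ A \ B, ∃ γ', R γ γ' := by
      intro γ hγ
      by_contra! hirr
      obtain ⟨_, -, hR, -⟩ := (hA (.single γ hirr) hγ.1).exists_tail hγ.2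
      exact hirr _ hR
    refine Or.inr ⟨⟨Set.nonempty_iff_ne_empty.mp (Set.sdiff_nonempty.mpr hAB), hrun⟩, ?_⟩
    rintro τ ⟨γ, hγ, hR⟩
    obtain ⟨τ', hcons, -, hτ'⟩ := (hA (.cons γ τ hR) hγ.1).exists_tail hγ.2
    rw [hcons.tail_unique (ExecPath.isCons_cons γ τ hR)] at hτ'
    exact hτ'.of_hd_mem ⟨γ, hγ, hR⟩
  exact OrderHom.le_gfp _ hX h

end Coinduction

/-- The reachability predicate `P ⇒ Q` is demonically valid iff every complete execution
path `τ` with `hd(τ) ∈ P` satisfies `P ⇒ Q`. -/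
theorem demValid_iff_forall_execPath (M : Type*) (R : M → M → Prop) (P Q : Set M) :
    DemValid R P Q ↔ ∀ τ : ExecPath M R, τ.hd ∈ P → PathSat R τ P Q :=
  ⟨fun h _ hτ => h.pathSat hτ, demValid_of_forall_pathSat⟩
end

section
/- Let (M, →) be a transition system. The set X = {(P₁ ∪ P₂, Q) | (M, →) ⊨∀ P₁ ⇒ Q and (M, →) ⊨∀ P₂ ⇒ Q} is equal to ν DVP̂, the set of all demonically valid reachability predicates over (M, →). -/
/-!
Whether `(P, Q) ∈ DVP̂ X` depends only on `P \ Q`, and both `· \ Q` and `∂` distribute over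
unions. So if `(P₁, Q)` and `(P₂, Q)` lie in `DVP̂ X`, then `(P₁ ∪ P₂, Q)` lies in `DVP̂` of the
pairwise unions of `X`. Applied to `X = ν DVP̂ = DVP̂ (ν DVP̂)`, this makes the pairwise unions of
`ν DVP̂` a post-fixed point of `DVP̂`, so by coinduction they lie in `ν DVP̂`.
-/

variable {M : Type*}

def pairUnions (X : Set (Set M × Set M)) : Set (Set M × Set M) :=
  {pq | ∃ P₁ P₂ Q, pq = (P₁ ∪ P₂, Q) ∧ (P₁, Q) ∈ X ∧ (P₂, Q) ∈ X}

theorem subset_pairUnions (X : Set (Set M × Set M)) : X ⊆ pairUnions X :=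
  fun ⟨P, Q⟩ h => ⟨P, P, Q, by rw [Set.union_self], h, h⟩

section

variable (R : M → M → Prop)

theorem derivS_union (A B : Set M) : derivS R (A ∪ B) = derivS R A ∪ derivS R B := by
  ext
  simp only [derivS, Set.mem_union, Set.mem_ofPred_eq, or_and_right, exists_or]

variable {R}

theorem Runnable.union_left {A B : Set M} (hA : Runnable R A) (hB : ∀ γ ∈ B, ∃ γ', R γ γ') :
    Runnable R (A ∪ B) :=
  ⟨fun h => hA.1 (Set.union_empty_iff.1 h).1, fun γ hγ => hγ.elim (hA.2 γ) (hB γ)⟩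

theorem mem_DVPhat_congr_diff {X : Set (Set M × Set M)} {P P' Q : Set M} (h : P \ Q = P' \ Q) :
    (P, Q) ∈ DVPhat R X ↔ (P', Q) ∈ DVPhat R X := by
  change P ⊆ Q ∨ _ ↔ P' ⊆ Q ∨ _
  rw [← Set.sdiff_eq_empty, ← Set.sdiff_eq_empty (s := P'), h]

theorem mem_DVPhat_union {X : Set (Set M × Set M)} {P₁ P₂ Q : Set M}
    (h₁ : (P₁, Q) ∈ DVPhat R X) (h₂ : (P₂, Q) ∈ DVPhat R X) :
    (P₁ ∪ P₂, Q) ∈ DVPhat R (pairUnions X) := by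
  have hdiff : (P₁ ∪ P₂) \ Q = P₁ \ Q ∪ P₂ \ Q := Set.union_sdiff_distrib
  rcases h₁ with hs₁ | ⟨hr₁, hd₁⟩
  · rw [mem_DVPhat_congr_diff (P' := P₂)
      (by rw [hdiff, Set.sdiff_eq_empty.2 hs₁, Set.empty_union])]
    exact (DVPhat R).mono (subset_pairUnions X) h₂
  rcases h₂ with hs₂ | ⟨hr₂, hd₂⟩
  · rw [mem_DVPhat_congr_diff (P' := P₁)
      (by rw [hdiff, Set.sdiff_eq_empty.2 hs₂, Set.union_empty])]
    exact (DVPhat R).mono (subset_pairUnions X) (Or.inr ⟨hr₁, hd₁⟩)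
  refine Or.inr ⟨?_, ?_⟩
  · change Runnable R ((P₁ ∪ P₂) \ Q)
    rw [hdiff]
    exact hr₁.union_left hr₂.2
  · change (derivS R ((P₁ ∪ P₂) \ Q), Q) ∈ pairUnions X
    rw [hdiff, derivS_union]
    exact ⟨_, _, Q, rfl, hd₁, hd₂⟩

end

/-- The set of unions of pairs of demonically valid predicates with the same target is
exactly `ν DVP̂`. -/
theorem union_demValid_eq_gfp (M : Type*) (R : M → M → Prop) :
    {pq : Set M × Set M | ∃ P₁ P₂ Q, pq = (P₁ ∪ P₂, Q) ∧
        DemValid R P₁ Q ∧ DemValid R P₂ Q} =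
      OrderHom.gfp (DVPhat R) := by
  change pairUnions (OrderHom.gfp (DVPhat R)) = _
  refine le_antisymm (OrderHom.le_gfp _ ?_) (subset_pairUnions _)
  rintro _ ⟨P₁, P₂, Q, rfl, h₁, h₂⟩
  rw [← OrderHom.map_gfp (DVPhat R)] at h₁ h₂
  exact mem_DVPhat_union h₁ h₂
end

section
/- Let L be a first-order language (with equality), M an L-structure, X a set of variables, t and t' L-terms with variables in X, and φ, φ' first-order L-formulas (possibly containing quantifiers) with free variables in X. Let S = (var(t) ∪ var(φ)) ∩ (var(t') ∪ var(φ')) be the set of shared variables and let x̃ = (var(t') ∪ var(φ')) \ (var(t) ∪ var(φ)). Then the following two conditions are equivalent: (1) for every map σ : S → M, the set {α(t) | α : X → M, M,α ⊨ φ, α agrees with σ on S} is contained in the set {α'(t') | α' : X → M, M,α' ⊨ φ', α' agrees with σ on S}; (2) for every valuation α : X → M with M,α ⊨ φ there exists a valuation β : X → M that agrees with α on every variable not in x̃ such that β(t) = β(t') and M,β ⊨ φ'. -/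
/-!
Both sides only ever inspect a valuation on the variables of the respective constrained term.
A witness `α'` for the inclusion, which agrees with `α` on the shared variables, can therefore be
glued with `α` into a single valuation that equals `α` off `x̃` and `α'` on the variables of
`⟦t'|φ'⟧`; conversely a valuation `β` that moves only `x̃` still agrees with `α` on the variables
of `⟦t|φ⟧`, in particular on the shared ones.
-/

open FirstOrder Language Set

section Gluing

variable {X M : Type*} {A B : Set X}

theorem exists_eq_off_diff_eqOn_of_eqOn_inter {f g : X → M} (h : EqOn f g (A ∩ B)) :
    ∃ β : X → M, (∀ x, x ∉ B \ A → β x = f x) ∧ EqOn β g B := by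
  classical
  refine ⟨(B \ A).piecewise g f, fun x hx => piecewise_eq_of_notMem _ _ _ hx, fun x hxB => ?_⟩
  by_cases hxA : x ∈ A
  · rw [piecewise_eq_of_notMem _ _ _ fun hx => hx.2 hxA]
    exact h ⟨hxA, hxB⟩
  · exact piecewise_eq_of_mem _ _ _ ⟨hxB, hxA⟩

theorem eqOn_of_forall_notMem_diff {β f : X → M} (h : ∀ x, x ∉ B \ A → β x = f x) :
    EqOn β f A :=
  fun x hxA => h x fun hx => hx.2 hxA

end Gluing

namespace FirstOrder.Language

variable {L : Language} {M : Type*} [L.Structure M] {X : Type*} [DecidableEq X] {v w : X → M}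

theorem Term.realize_congr {t : L.Term X} (h : EqOn v w t.varFinset) :
    t.realize v = t.realize w := by
  have hvw := domRestrict_eq_domRestrict_iff.2 h
  rw [domRestrict_eq, domRestrict_eq] at hvw
  rw [← realize_restrictVar' subset_rfl, hvw, realize_restrictVar']

theorem BoundedFormula.realize_congr {n : ℕ} {φ : L.BoundedFormula X n} {xs : Fin n → M}
    (h : EqOn v w φ.freeVarFinset) : φ.Realize v xs ↔ φ.Realize w xs := by
  have hvw := domRestrict_eq_domRestrict_iff.2 h
  rw [domRestrict_eq, domRestrict_eq] at hvw
  rw [← realize_restrictFreeVar' subset_rfl, hvw, realize_restrictFreeVar']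

theorem Formula.realize_congr {φ : L.Formula X} (h : EqOn v w φ.freeVarFinset) :
    φ.Realize v ↔ φ.Realize w :=
  BoundedFormula.realize_congr h

end FirstOrder.Language

/-- Semantic characterisation of shared-variable inclusion of constrained terms:
`⟦t|φ⟧ ⊆_shared ⟦t'|φ'⟧` iff `M ⊨ φ → (∃x̃)(t = t' ∧ φ')`, stated semantically. -/
theorem constrainedTerm_subset_shared_iff
    {L : FirstOrder.Language} {M : Type*} [L.Structure M]
    {X : Type*} [DecidableEq X]
    (t t' : L.Term X) (φ φ' : L.Formula X)
    (S xt : Set X)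
    (hS : S = ((↑t.varFinset ∪ ↑(BoundedFormula.freeVarFinset φ) : Set X)) ∩
        ((↑t'.varFinset ∪ ↑(BoundedFormula.freeVarFinset φ') : Set X)))
    (hxt : xt = ((↑t'.varFinset ∪ ↑(BoundedFormula.freeVarFinset φ') : Set X)) \
        ((↑t.varFinset ∪ ↑(BoundedFormula.freeVarFinset φ) : Set X))) :
    (∀ σ : S → M,
        {m : M | ∃ α : X → M, φ.Realize α ∧
            (∀ x (hx : x ∈ S), α x = σ ⟨x, hx⟩) ∧ m = t.realize α} ⊆
          {m : M | ∃ α' : X → M, φ'.Realize α' ∧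
            (∀ x (hx : x ∈ S), α' x = σ ⟨x, hx⟩) ∧ m = t'.realize α'}) ↔
      (∀ α : X → M, φ.Realize α →
        ∃ β : X → M, (∀ x, x ∉ xt → β x = α x) ∧
          t.realize β = t'.realize β ∧ φ'.Realize β) := by
  subst hS hxt
  constructor
  · intro h α hα
    obtain ⟨α', hα', hα'S, ht⟩ := h (fun s => α s) ⟨α, hα, fun _ _ => rfl, rfl⟩
    obtain ⟨β, hβ, hβB⟩ :=
      exists_eq_off_diff_eqOn_of_eqOn_inter (f := α) (g := α') fun x hx => (hα'S x hx).symm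
    have hβA := eqOn_of_forall_notMem_diff hβ
    refine ⟨β, hβ, ?_, (Formula.realize_congr (hβB.mono subset_union_right)).2 hα'⟩
    rw [Term.realize_congr (hβA.mono subset_union_left),
      Term.realize_congr (hβB.mono subset_union_left), ht]
  · rintro h σ _ ⟨α, hα, hαS, rfl⟩
    obtain ⟨β, hβ, hβt, hβφ'⟩ := h α hα
    have hβA := eqOn_of_forall_notMem_diff hβ
    refine ⟨β, hβφ', fun x hx => (hβA hx.1).trans (hαS x hx), ?_⟩
    rw [← Term.realize_congr (hβA.mono subset_union_left), hβt]
end
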